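/- arXiv:2312.15168 — 2 statements merged into one kernel-verified Lean document; each statement's English description precedes it below -/
import Mathlib

section
/- The function 𝐃² has the following properties: (a) 𝐃(X,T)² > 0 whenever (X,T) ≠ (0,0); (b) there exist constants 0 < c ≤ C such that c·(|X|² + |T|) ≤ 𝐃(X,T)² ≤ C·(|X|² + |T|) for all X ∈ ℝ², T ∈ ℝ³; (c) for every h > 0 and all (X,T), 𝐃(X/√h, T/h)² = 𝐃(X,T)²/h; (d) the map (X,T) ↦ 𝐃(X,T)² is continuous on ℝ² × ℝ³. -/
/-!
`𝐃(X,T)²` depends on `X` only through `a = |X|²`, and as a function of `(a, T)` it is the support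
function `sup_τ (Υ(|τ|) a + 4 T·τ)`: positively homogeneous, which is the scaling law, and convex,
hence continuous on the open half-space `a > 0`. On the boundary `a = 0` it is lower semicontinuous
as a supremum of continuous functions, and upper semicontinuous because `Υ ≤ 3` bounds it by
`𝐃(0,T₀)² + 3a + 4ϑ₁|T - T₀|`.

The bound `Υ ≤ 3` on `[0, ϑ₁)` is `3 sin r - 3r cos r - r² sin r ≥ 0`, whose derivative
`r (sin r - r cos r)` is positive before `ϑ₁`. It gives `𝐃² ≤ 3|X|² + 4ϑ₁|T|`, while testing
`τ = 0` and `|τ| = π` (where `Υ = 0`) gives `𝐃² ≥ max (3|X|²) (4π|T|)`.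
-/

open Real MeasureTheory Asymptotics Filter

noncomputable section
open scoped Classical

/-- Euclidean norm on `ℝ³`. -/
def nrm3 (v : Fin 3 → ℝ) : ℝ := Real.sqrt (v 0 ^ 2 + v 1 ^ 2 + v 2 ^ 2)

/-- Euclidean inner product on `ℝ³`. -/
def dot3 (v w : Fin 3 → ℝ) : ℝ := v 0 * w 0 + v 1 * w 1 + v 2 * w 2

/-- `Υ(r) = r²·sin r/(sin r − r·cos r)` with `Υ(0) := 3`. -/
def Ups (r : ℝ) : ℝ :=
  if r = 0 then 3 else r ^ 2 * Real.sin r / (Real.sin r - r * Real.cos r)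

/-- The squared "intrinsic distance" `𝐃(X,T)² = sup{Υ(|τ|)|X|² + 4T·τ : |τ| < ϑ₁}`. -/
def Dsq (ϑ : ℝ) (X : ℝ × ℝ) (T : Fin 3 → ℝ) : ℝ :=
  sSup ((fun τ : Fin 3 → ℝ => Ups (nrm3 τ) * (X.1 ^ 2 + X.2 ^ 2) + 4 * dot3 T τ) ''
    {τ | nrm3 τ < ϑ})

open Set Topology

lemma nrm3_eq_norm (v : Fin 3 → ℝ) : nrm3 v = ‖(WithLp.toLp 2 v : EuclideanSpace ℝ (Fin 3))‖ := by
  simp [nrm3, EuclideanSpace.norm_eq, Fin.sum_univ_three]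

lemma dot3_eq_inner (v w : Fin 3 → ℝ) :
    dot3 v w = inner ℝ (WithLp.toLp 2 v : EuclideanSpace ℝ (Fin 3)) (WithLp.toLp 2 w) := by
  simp [dot3, PiLp.inner_apply, Fin.sum_univ_three, mul_comm]

lemma nrm3_nonneg (v : Fin 3 → ℝ) : 0 ≤ nrm3 v := sqrt_nonneg _

@[simp] lemma nrm3_eq_zero {v : Fin 3 → ℝ} : nrm3 v = 0 ↔ v = 0 := by
  rw [nrm3_eq_norm, norm_eq_zero, WithLp.toLp_eq_zero]

lemma nrm3_smul (c : ℝ) (v : Fin 3 → ℝ) : nrm3 (c • v) = |c| * nrm3 v := by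
  rw [nrm3_eq_norm, nrm3_eq_norm, WithLp.toLp_smul, norm_smul, norm_eq_abs]

lemma continuous_nrm3 : Continuous nrm3 := by
  unfold nrm3; fun_prop

lemma dot3_le_nrm3_mul (v w : Fin 3 → ℝ) : dot3 v w ≤ nrm3 v * nrm3 w := by
  rw [dot3_eq_inner, nrm3_eq_norm, nrm3_eq_norm]
  exact real_inner_le_norm _ _

lemma dot3_smul_right_self (c : ℝ) (v : Fin 3 → ℝ) : dot3 v (c • v) = c * nrm3 v ^ 2 := by
  rw [dot3_eq_inner, nrm3_eq_norm, WithLp.toLp_smul, inner_smul_right,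
    real_inner_self_eq_norm_sq]

theorem convexOn_ciSup {ι E : Type*} [Nonempty ι] [AddCommMonoid E] [Module ℝ E] {C : Set E}
    {f : ι → E → ℝ} (hf : ∀ i, ConvexOn ℝ C (f i))
    (hbdd : ∀ x ∈ C, BddAbove (range fun i => f i x)) :
    ConvexOn ℝ C fun x => ⨆ i, f i x :=
  ⟨(hf (Classical.arbitrary ι)).1, fun x hx y hy _ _ ha hb hab => ciSup_le fun i =>
    ((hf i).2 hx hy ha hb hab).trans <| add_le_add
      (mul_le_mul_of_nonneg_left (le_ciSup (hbdd x hx) i) ha)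
      (mul_le_mul_of_nonneg_left (le_ciSup (hbdd y hy) i) hb)⟩

lemma hasDerivAt_sin_sub_mul_cos (r : ℝ) :
    HasDerivAt (fun x => sin x - x * cos x) (r * sin r) r := by
  refine ((hasDerivAt_sin r).sub ((hasDerivAt_id r).mul (hasDerivAt_cos r))).congr_deriv ?_
  simp only [id]
  ring

lemma hasDerivAt_three_mul_sin_sub_mul_cos_sub (r : ℝ) :
    HasDerivAt (fun x => 3 * (sin x - x * cos x) - x ^ 2 * sin x)
      (r * (sin r - r * cos r)) r := by
  refine (((hasDerivAt_sin_sub_mul_cos r).const_mul 3).sub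
    ((hasDerivAt_pow 2 r).mul (hasDerivAt_sin r))).congr_deriv ?_
  norm_num
  ring

lemma Ups_pi : Ups π = 0 := by simp [Ups, pi_ne_zero]

/-- The support function of `{(Υ(|τ|), 4τ) : |τ| < ϑ}`; `Dsq ϑ X T` is its value at `(|X|², T)`. -/
def supportFun (ϑ : ℝ) (p : ℝ × (Fin 3 → ℝ)) : ℝ :=
  ⨆ τ : {τ : Fin 3 → ℝ // nrm3 τ < ϑ}, Ups (nrm3 τ) * p.1 + 4 * dot3 p.2 τ

lemma Dsq_eq_supportFun (ϑ : ℝ) (X : ℝ × ℝ) (T : Fin 3 → ℝ) :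
    Dsq ϑ X T = supportFun ϑ (X.1 ^ 2 + X.2 ^ 2, T) :=
  sSup_image'

lemma supportFun_smul (ϑ : ℝ) {c : ℝ} (hc : 0 ≤ c) (p : ℝ × (Fin 3 → ℝ)) :
    supportFun ϑ (c • p) = c * supportFun ϑ p := by
  rw [supportFun, supportFun, Real.mul_iSup_of_nonneg hc]
  congr 1 with τ
  simp only [Prod.smul_fst, Prod.smul_snd, smul_eq_mul, dot3, Pi.smul_apply]
  ring

lemma Dsq_div_of_pos (ϑ : ℝ) {h : ℝ} (hh : 0 < h) (X : ℝ × ℝ) (T : Fin 3 → ℝ) :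
    Dsq ϑ (X.1 / √h, X.2 / √h) (fun i => T i / h) = Dsq ϑ X T / h := by
  have hscale : (((X.1 / √h, X.2 / √h) : ℝ × ℝ).1 ^ 2 + ((X.1 / √h, X.2 / √h) : ℝ × ℝ).2 ^ 2,
      fun i => T i / h) = h⁻¹ • (X.1 ^ 2 + X.2 ^ 2, T) := by
    refine Prod.ext ?_ (funext fun i => ?_)
    · simp only [div_pow, sq_sqrt hh.le, Prod.smul_fst, smul_eq_mul]
      ring
    · simp only [Prod.smul_snd, Pi.smul_apply, smul_eq_mul]
      ring
  rw [Dsq_eq_supportFun, Dsq_eq_supportFun, hscale, supportFun_smul ϑ (inv_nonneg.2 hh.le),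
    inv_mul_eq_div]

lemma sq_add_sq_add_nrm3_pos {X : ℝ × ℝ} {T : Fin 3 → ℝ} (hXT : ¬(X = 0 ∧ T = 0)) :
    0 < X.1 ^ 2 + X.2 ^ 2 + nrm3 T := by
  by_contra! h
  have h₁ : X.1 ^ 2 = 0 := by linarith [sq_nonneg X.1, sq_nonneg X.2, nrm3_nonneg T]
  have h₂ : X.2 ^ 2 = 0 := by linarith [sq_nonneg X.1, sq_nonneg X.2, nrm3_nonneg T]
  have h₃ : nrm3 T = 0 := by linarith [sq_nonneg X.1, sq_nonneg X.2, nrm3_nonneg T]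
  exact hXT ⟨Prod.ext (pow_eq_zero_iff two_ne_zero |>.1 h₁) (pow_eq_zero_iff two_ne_zero |>.1 h₂),
    nrm3_eq_zero.1 h₃⟩

section FirstRoot

variable {ϑ : ℝ} (hϑ : ϑ ∈ Ioo π (3 * π / 2)) (hϑtan : tan ϑ = ϑ)
include hϑ hϑtan

lemma sin_sub_mul_cos_pos {r : ℝ} (hr0 : 0 < r) (hrϑ : r < ϑ) : 0 < sin r - r * cos r := by
  set g : ℝ → ℝ := fun x => sin x - x * cos x
  have hg : ContinuousOn g (Icc 0 ϑ) := by fun_prop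
  have hg' : ∀ x s, HasDerivWithinAt g (x * sin x) s x := fun x _ =>
    (hasDerivAt_sin_sub_mul_cos x).hasDerivWithinAt
  rcases le_or_gt r π with hrπ | hπr
  · have hmono := strictMonoOn_of_hasDerivWithinAt_pos (convex_Icc 0 π)
      (hg.mono (Icc_subset_Icc_right hϑ.1.le)) (fun x _ => hg' x _) fun x hx => by
        rw [interior_Icc] at hx
        exact mul_pos hx.1 (sin_pos_of_pos_of_lt_pi hx.1 hx.2)
    simpa [g] using hmono ⟨le_rfl, pi_pos.le⟩ ⟨hr0.le, hrπ⟩ hr0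
  · -- past `π` the function decreases, down to its zero at `ϑ`
    have hcos : cos ϑ < 0 :=
      cos_neg_of_pi_div_two_lt_of_lt (by linarith [hϑ.1, pi_pos]) (by linarith [hϑ.2])
    have hgϑ : g ϑ = 0 := by
      rw [tan_eq_sin_div_cos, div_eq_iff hcos.ne] at hϑtan
      simp only [g]
      linarith
    have hanti := strictAntiOn_of_hasDerivWithinAt_neg (convex_Icc π ϑ)
      (hg.mono (Icc_subset_Icc_left pi_pos.le)) (fun x _ => hg' x _) fun x hx => by
        rw [interior_Icc] at hx
        have hsin := sin_pos_of_pos_of_lt_pi (sub_pos.2 hx.1) (by linarith [hx.2, hϑ.2])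
        rw [sin_sub_pi] at hsin
        exact mul_neg_of_pos_of_neg (by linarith [pi_pos, hx.1]) (by linarith)
    simpa [g, hgϑ] using hanti ⟨hπr.le, hrϑ.le⟩ ⟨hϑ.1.le, le_rfl⟩ hrϑ

lemma Ups_le_three {r : ℝ} (hr0 : 0 ≤ r) (hrϑ : r < ϑ) : Ups r ≤ 3 := by
  rcases hr0.eq_or_lt with rfl | hr0
  · simp [Ups]
  have hmono : MonotoneOn (fun x => 3 * (sin x - x * cos x) - x ^ 2 * sin x) (Icc 0 r) :=
    monotoneOn_of_hasDerivWithinAt_nonneg (convex_Icc 0 r) (by fun_prop)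
      (fun x _ => (hasDerivAt_three_mul_sin_sub_mul_cos_sub x).hasDerivWithinAt) fun x hx => by
        rw [interior_Icc] at hx
        exact mul_nonneg hx.1.le (sin_sub_mul_cos_pos hϑ hϑtan hx.1 (hx.2.trans hrϑ)).le
  have h := hmono ⟨le_rfl, hr0.le⟩ ⟨hr0.le, le_rfl⟩ hr0.le
  rw [Ups, if_neg hr0.ne', div_le_iff₀ (sin_sub_mul_cos_pos hϑ hϑtan hr0 hrϑ)]
  norm_num at h
  linarith

lemma Ups_mul_add_dot3_le {τ : Fin 3 → ℝ} (hτ : nrm3 τ < ϑ) {a : ℝ} (ha : 0 ≤ a)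
    (T : Fin 3 → ℝ) : Ups (nrm3 τ) * a + 4 * dot3 T τ ≤ 3 * a + 4 * ϑ * nrm3 T := by
  have hUps := mul_le_mul_of_nonneg_right (Ups_le_three hϑ hϑtan (nrm3_nonneg τ) hτ) ha
  have hdot := (dot3_le_nrm3_mul T τ).trans (mul_le_mul_of_nonneg_left hτ.le (nrm3_nonneg T))
  linarith

lemma bddAbove_range_Ups_mul_add_dot3 {p : ℝ × (Fin 3 → ℝ)} (hp : 0 ≤ p.1) :
    BddAbove (range fun τ : {τ : Fin 3 → ℝ // nrm3 τ < ϑ} =>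
      Ups (nrm3 τ) * p.1 + 4 * dot3 p.2 τ) :=
  ⟨_, forall_mem_range.2 fun τ => Ups_mul_add_dot3_le hϑ hϑtan τ.2 hp p.2⟩

lemma le_supportFun {p : ℝ × (Fin 3 → ℝ)} (hp : 0 ≤ p.1) {τ : Fin 3 → ℝ} (hτ : nrm3 τ < ϑ) :
    Ups (nrm3 τ) * p.1 + 4 * dot3 p.2 τ ≤ supportFun ϑ p :=
  le_ciSup (f := fun τ : {τ : Fin 3 → ℝ // nrm3 τ < ϑ} => Ups (nrm3 τ) * p.1 + 4 * dot3 p.2 τ)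
    (bddAbove_range_Ups_mul_add_dot3 hϑ hϑtan hp) ⟨τ, hτ⟩

omit hϑtan in
lemma nonempty_nrm3_lt : Nonempty {τ : Fin 3 → ℝ // nrm3 τ < ϑ} :=
  ⟨⟨0, by simpa [nrm3] using pi_pos.trans hϑ.1⟩⟩

lemma supportFun_le {a : ℝ} (ha : 0 ≤ a) (T : Fin 3 → ℝ) :
    supportFun ϑ (a, T) ≤ 3 * a + 4 * ϑ * nrm3 T :=
  have := nonempty_nrm3_lt hϑ
  ciSup_le fun τ => Ups_mul_add_dot3_le hϑ hϑtan τ.2 ha T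

lemma supportFun_le_supportFun_zero_add {a : ℝ} (ha : 0 ≤ a) (T T₀ : Fin 3 → ℝ) :
    supportFun ϑ (a, T) ≤ supportFun ϑ (0, T₀) + 3 * a + 4 * ϑ * nrm3 (T - T₀) := by
  have := nonempty_nrm3_lt hϑ
  refine ciSup_le fun τ => ?_
  have h₀ := le_supportFun hϑ hϑtan (p := (0, T₀)) le_rfl τ.2
  have hsub := Ups_mul_add_dot3_le hϑ hϑtan τ.2 ha (T - T₀)
  have hdot : dot3 T τ = dot3 T₀ τ + dot3 (T - T₀) τ := by simp only [dot3, Pi.sub_apply]; ring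
  dsimp only at h₀ ⊢
  linarith

lemma convexOn_supportFun : ConvexOn ℝ {p : ℝ × (Fin 3 → ℝ) | 0 ≤ p.1} (supportFun ϑ) := by
  have := nonempty_nrm3_lt hϑ
  refine convexOn_ciSup (fun τ => ⟨?_, fun _ _ _ _ _ _ _ _ _ => le_of_eq ?_⟩)
    fun p hp => bddAbove_range_Ups_mul_add_dot3 hϑ hϑtan hp
  · exact convex_halfSpace_ge (LinearMap.fst ℝ ℝ (Fin 3 → ℝ)).isLinear 0
  · simp only [Prod.fst_add, Prod.snd_add, Prod.smul_fst, Prod.smul_snd, smul_eq_mul, dot3,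
      Pi.add_apply, Pi.smul_apply]
    ring

lemma lowerSemicontinuousOn_supportFun :
    LowerSemicontinuousOn (supportFun ϑ) {p : ℝ × (Fin 3 → ℝ) | 0 ≤ p.1} :=
  lowerSemicontinuousOn_ciSup (fun _ hp => bddAbove_range_Ups_mul_add_dot3 hϑ hϑtan hp)
    fun τ => (show Continuous fun p : ℝ × (Fin 3 → ℝ) => Ups (nrm3 τ) * p.1 + 4 * dot3 p.2 τ by
      unfold dot3; fun_prop).lowerSemicontinuous.lowerSemicontinuousOn _

lemma upperSemicontinuousWithinAt_supportFun_zero (T₀ : Fin 3 → ℝ) :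
    UpperSemicontinuousWithinAt (supportFun ϑ) {p : ℝ × (Fin 3 → ℝ) | 0 ≤ p.1} (0, T₀) := by
  intro y hy
  have hbound : ContinuousAt (fun p : ℝ × (Fin 3 → ℝ) =>
      supportFun ϑ (0, T₀) + 3 * p.1 + 4 * ϑ * nrm3 (p.2 - T₀)) (0, T₀) :=
    (continuous_const.add (continuous_const.mul continuous_fst)).add
      (continuous_const.mul (continuous_nrm3.comp (continuous_snd.sub continuous_const)))
      |>.continuousAt
  have hy' : ∀ᶠ p in 𝓝 (0, T₀), supportFun ϑ (0, T₀) + 3 * p.1 + 4 * ϑ * nrm3 (p.2 - T₀) < y :=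
    hbound.eventually_lt continuousAt_const (by simpa [nrm3] using hy)
  filter_upwards [nhdsWithin_le_nhds hy', self_mem_nhdsWithin] with p hp hp₀
  exact (supportFun_le_supportFun_zero_add hϑ hϑtan hp₀ p.2 T₀).trans_lt hp

lemma continuousOn_supportFun :
    ContinuousOn (supportFun ϑ) {p : ℝ × (Fin 3 → ℝ) | 0 ≤ p.1} := by
  rintro ⟨a, T₀⟩ (ha : 0 ≤ a)
  rcases ha.eq_or_lt with rfl | ha
  · exact continuousWithinAt_iff_lower_upperSemicontinuousWithinAt.2
      ⟨lowerSemicontinuousOn_supportFun hϑ hϑtan _ (le_refl (0 : ℝ)),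
        upperSemicontinuousWithinAt_supportFun_zero hϑ hϑtan T₀⟩
  · have hint : (a, T₀) ∈ interior {p : ℝ × (Fin 3 → ℝ) | 0 ≤ p.1} :=
      mem_interior_iff_mem_nhds.2 <| mem_of_superset
        ((isOpen_lt continuous_const continuous_fst).mem_nhds (show (0 : ℝ) < (a, T₀).1 from ha))
        fun p (hp : 0 < p.1) => hp.le
    exact (((convexOn_supportFun hϑ hϑtan).continuousOn_interior _ hint).continuousAt
      (isOpen_interior.mem_nhds hint)).continuousWithinAt

lemma continuous_Dsq : Continuous fun q : (ℝ × ℝ) × (Fin 3 → ℝ) => Dsq ϑ q.1 q.2 := by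
  simp_rw [Dsq_eq_supportFun]
  exact (continuousOn_supportFun hϑ hϑtan).comp_continuous (by fun_prop) fun q =>
    show 0 ≤ q.1.1 ^ 2 + q.1.2 ^ 2 by positivity

lemma three_mul_le_Dsq (X : ℝ × ℝ) (T : Fin 3 → ℝ) : 3 * (X.1 ^ 2 + X.2 ^ 2) ≤ Dsq ϑ X T := by
  rw [Dsq_eq_supportFun]
  simpa [Ups, nrm3, dot3] using le_supportFun hϑ hϑtan (p := (X.1 ^ 2 + X.2 ^ 2, T))
    (by positivity) (τ := 0) (by simpa [nrm3] using pi_pos.trans hϑ.1)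

lemma four_pi_mul_le_Dsq (X : ℝ × ℝ) (T : Fin 3 → ℝ) : 4 * π * nrm3 T ≤ Dsq ϑ X T := by
  rcases eq_or_ne T 0 with rfl | hT
  · simpa [nrm3] using (three_mul_le_Dsq hϑ hϑtan X 0).trans' (by positivity)
  have hT' : 0 < nrm3 T := (nrm3_nonneg T).lt_of_ne' (nrm3_eq_zero.not.2 hT)
  -- test with `τ = π T / |T|`, for which `Υ(|τ|) = Υ(π) = 0`
  set τ := (π / nrm3 T) • T
  have hτ : nrm3 τ = π := by
    rw [nrm3_smul, abs_of_pos (by positivity), div_mul_cancel₀ _ hT'.ne']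
  have hdot : dot3 T τ = π * nrm3 T := by
    rw [dot3_smul_right_self]
    field_simp
  have h := le_supportFun hϑ hϑtan (p := (X.1 ^ 2 + X.2 ^ 2, T)) (by positivity)
    (by rw [hτ]; exact hϑ.1 : nrm3 τ < ϑ)
  rw [hτ, Ups_pi, hdot] at h
  rw [Dsq_eq_supportFun]
  linarith

lemma Dsq_le (X : ℝ × ℝ) (T : Fin 3 → ℝ) :
    Dsq ϑ X T ≤ 3 * (X.1 ^ 2 + X.2 ^ 2) + 4 * ϑ * nrm3 T := by
  rw [Dsq_eq_supportFun]
  exact supportFun_le hϑ hϑtan (by positivity) T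

end FirstRoot

/-- positivity, two-sided equivalence with `|X|² + |T|`, the scaling
property, and continuity of `(X,T) ↦ 𝐃(X,T)²`. -/
theorem statement8 (ϑ : ℝ) (hϑ : ϑ ∈ Set.Ioo Real.pi (3 * Real.pi / 2)) (hϑtan : Real.tan ϑ = ϑ) :
    (∀ (X : ℝ × ℝ) (T : Fin 3 → ℝ), ¬(X = 0 ∧ T = 0) → 0 < Dsq ϑ X T) ∧
    (∃ c C : ℝ, 0 < c ∧ c ≤ C ∧
      ∀ (X : ℝ × ℝ) (T : Fin 3 → ℝ),
        c * (X.1 ^ 2 + X.2 ^ 2 + nrm3 T) ≤ Dsq ϑ X T ∧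
          Dsq ϑ X T ≤ C * (X.1 ^ 2 + X.2 ^ 2 + nrm3 T)) ∧
    (∀ h : ℝ, 0 < h → ∀ (X : ℝ × ℝ) (T : Fin 3 → ℝ),
      Dsq ϑ (X.1 / Real.sqrt h, X.2 / Real.sqrt h) (fun i => T i / h) = Dsq ϑ X T / h) ∧
    Continuous (fun q : (ℝ × ℝ) × (Fin 3 → ℝ) => Dsq ϑ q.1 q.2) := by
  have hπ : 3 < π := pi_gt_three
  have hπϑ : π < ϑ := hϑ.1
  have lower (X : ℝ × ℝ) (T : Fin 3 → ℝ) :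
      3 / 2 * (X.1 ^ 2 + X.2 ^ 2 + nrm3 T) ≤ Dsq ϑ X T := by
    nlinarith [three_mul_le_Dsq hϑ hϑtan X T, four_pi_mul_le_Dsq hϑ hϑtan X T, nrm3_nonneg T]
  have upper (X : ℝ × ℝ) (T : Fin 3 → ℝ) : Dsq ϑ X T ≤ 4 * ϑ * (X.1 ^ 2 + X.2 ^ 2 + nrm3 T) := by
    nlinarith [Dsq_le hϑ hϑtan X T, nrm3_nonneg T, sq_nonneg X.1, sq_nonneg X.2]
  refine ⟨fun X T hXT => ?_, ⟨3 / 2, 4 * ϑ, by norm_num, by linarith, fun X T => ⟨lower X T,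
    upper X T⟩⟩, fun h hh X T => Dsq_div_of_pos ϑ hh X T, continuous_Dsq hϑ hϑtan⟩
  exact (mul_pos (by norm_num) (sq_add_sq_add_nrm3_pos hXT)).trans_le (lower X T)
end
end

section
/- For every r > 0, one has h(r) := r² + r·sin r·cos r − 2·sin² r > 0. -/
/-!
With `t = 2r` one has `4 h(r) = g(t)` for `g(t) = t² + t sin t + 4 cos t - 4`.
The function `g` vanishes at `0` together with `g'` and `g''`, and
`g''' (t) = sin t - t cos t` has derivative `t sin t`, which is positive on `(0, π)`;
so `g > 0` on `(0, π]`, i.e. `h > 0` on `(0, π/2]`.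
For `r ≥ π/2`, `sin 2r = -sin (2r - π) ≥ π - 2r` gives
`h(r) ≥ π r / 2 - 2 ≥ π²/4 - 2 > 0`.
-/

open Real Set

lemma pos_of_hasDerivAt_of_pos {f f' : ℝ → ℝ} {a b : ℝ}
    (hderiv : ∀ x ∈ Icc a b, HasDerivAt f (f' x) x) (hfa : f a = 0)
    (hf' : ∀ x ∈ Ioo a b, 0 < f' x) {x : ℝ} (hx : x ∈ Ioc a b) : 0 < f x := by
  have hmono : StrictMonoOn f (Icc a b) := by
    refine strictMonoOn_of_hasDerivWithinAt_pos (convex_Icc a b)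
      (fun y hy => (hderiv y hy).continuousAt.continuousWithinAt) (f' := f') ?_ ?_
    · intro y hy
      rw [interior_Icc] at hy ⊢
      exact (hderiv y (Ioo_subset_Icc_self hy)).hasDerivWithinAt
    · rw [interior_Icc]
      exact hf'
  simpa [hfa] using
    hmono (left_mem_Icc.2 (hx.1.le.trans hx.2)) (Ioc_subset_Icc_self hx) hx.1

lemma sin_sub_mul_cos_pos_s13 {x : ℝ} (hx : x ∈ Ioc 0 π) : 0 < sin x - x * cos x := by
  refine pos_of_hasDerivAt_of_pos (f := fun t => sin t - t * cos t) (f' := fun t => t * sin t)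
    (fun t _ => ?_) (by simp) (fun t ht => mul_pos ht.1 (sin_pos_of_pos_of_lt_pi ht.1 ht.2)) hx
  exact ((hasDerivAt_sin t).sub ((hasDerivAt_id' t).mul (hasDerivAt_cos t))).congr_deriv (by ring)

lemma two_sub_two_mul_cos_sub_mul_sin_pos {x : ℝ} (hx : x ∈ Ioc 0 π) :
    0 < 2 - 2 * cos x - x * sin x := by
  refine pos_of_hasDerivAt_of_pos (f := fun t => 2 - 2 * cos t - t * sin t)
    (f' := fun t => sin t - t * cos t) (fun t _ => ?_) (by simp)
    (fun t ht => sin_sub_mul_cos_pos_s13 (Ioo_subset_Ioc_self ht)) hx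
  exact (((hasDerivAt_const t 2).sub ((hasDerivAt_cos t).const_mul 2)).sub
    ((hasDerivAt_id' t).mul (hasDerivAt_sin t))).congr_deriv (by ring)

lemma two_mul_add_mul_cos_sub_three_mul_sin_pos {x : ℝ} (hx : x ∈ Ioc 0 π) :
    0 < 2 * x + x * cos x - 3 * sin x := by
  refine pos_of_hasDerivAt_of_pos (f := fun t => 2 * t + t * cos t - 3 * sin t)
    (f' := fun t => 2 - 2 * cos t - t * sin t) (fun t _ => ?_)
    (by simp) (fun t ht => two_sub_two_mul_cos_sub_mul_sin_pos (Ioo_subset_Ioc_self ht)) hx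
  exact ((((hasDerivAt_id' t).const_mul 2).add ((hasDerivAt_id' t).mul (hasDerivAt_cos t))).sub
    ((hasDerivAt_sin t).const_mul 3)).congr_deriv (by ring)

lemma sq_add_mul_sin_add_four_mul_cos_sub_four_pos {x : ℝ} (hx : x ∈ Ioc 0 π) :
    0 < x ^ 2 + x * sin x + 4 * cos x - 4 := by
  refine pos_of_hasDerivAt_of_pos (f := fun t => t ^ 2 + t * sin t + 4 * cos t - 4)
    (f' := fun t => 2 * t + t * cos t - 3 * sin t) (fun t _ => ?_) (by simp)
    (fun t ht => two_mul_add_mul_cos_sub_three_mul_sin_pos (Ioo_subset_Ioc_self ht)) hx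
  exact ((((hasDerivAt_pow 2 t).add ((hasDerivAt_id' t).mul (hasDerivAt_sin t))).add
    ((hasDerivAt_cos t).const_mul 4)).sub_const 4).congr_deriv (by ring)

lemma sq_add_mul_sin_mul_cos_sub_two_mul_sin_sq_pos_of_le_pi_div_two {r : ℝ}
    (hr : r ∈ Ioc 0 (π / 2)) : 0 < r ^ 2 + r * sin r * cos r - 2 * sin r ^ 2 := by
  have hg := sq_add_mul_sin_add_four_mul_cos_sub_four_pos
    (x := 2 * r) ⟨by linarith [hr.1], by linarith [hr.2]⟩
  rw [sin_two_mul, cos_two_mul, cos_sq'] at hg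
  linarith

lemma sq_add_mul_sin_mul_cos_sub_two_mul_sin_sq_pos_of_pi_div_two_le {r : ℝ}
    (hr : π / 2 ≤ r) : 0 < r ^ 2 + r * sin r * cos r - 2 * sin r ^ 2 := by
  have hsin : -sin (2 * r) ≤ 2 * r - π := by
    rw [← sin_sub_pi]
    exact sin_le (by linarith)
  rw [sin_two_mul] at hsin
  nlinarith [sin_sq_le_one r, pi_gt_three]

/-- for every `r > 0`, `h(r) := r² + r·sin r·cos r − 2·sin² r > 0`. -/
theorem statement13 :
    ∀ r : ℝ, 0 < r → 0 < r ^ 2 + r * Real.sin r * Real.cos r - 2 * Real.sin r ^ 2 := by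
  intro r hr
  rcases le_or_gt r (π / 2) with hle | hgt
  · exact sq_add_mul_sin_mul_cos_sub_two_mul_sin_sq_pos_of_le_pi_div_two ⟨hr, hle⟩
  · exact sq_add_mul_sin_mul_cos_sub_two_mul_sin_sq_pos_of_pi_div_two_le hgt.le
end
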